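/- Under the Bernoulli model setup, the generalization gap satisfies g_n ≥ 0 for every n ≥ 1. -/

import Mathlib

open Real Finset

/-!
Proof idea. Write `φ(x) = sign x − sign (x − ε sign x)`; it is odd and nonnegative for `x ≥ 0`,
so `k ↦ φ(θ(j)(2k/n − 1))` is antisymmetric under `k ↦ n − k` and nonnegative for `2k ≥ n`.
Pairing `k` with `n − k` turns the binomial expectation into
`½ Σₖ (P(S = k) − P(S = n − k)) φ(…)`, and for `p = (1+τ)/2 ≥ 1/2` the weight difference has
the same sign as `2k − n`, so every term is nonnegative.
-/

/-- Generalization gap `g_n = Wτ · E[Σⱼ θ(j)(sign(u(j)) − sign(u(j) − ε·sign(u(j))))]` in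
the Bernoulli model, where `u(j) = θ(j)(2 S_j/n − 1)` with independent
`S_j ~ Binomial(n, (1+τ)/2)`; by linearity of expectation this equals the coordinatewise
sum of expectations over the binomial distribution. -/
noncomputable def berGap (d : ℕ) (W ε : ℝ) (θ : Fin d → ℝ) (τ : ℝ) (n : ℕ) : ℝ :=
  W * τ * ∑ j, θ j *
    ∑ k ∈ Finset.range (n + 1),
      (n.choose k : ℝ) * ((1 + τ)/2) ^ k * ((1 - τ)/2) ^ (n - k) *
      (Real.sign (θ j * (2 * (k : ℝ)/n - 1))
        - Real.sign (θ j * (2 * (k : ℝ)/n - 1)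
            - ε * Real.sign (θ j * (2 * (k : ℝ)/n - 1))))

lemma Real.sign_le_one (x : ℝ) : Real.sign x ≤ 1 := by
  rcases Real.sign_apply_eq x with h | h | h <;> rw [h] <;> norm_num

lemma Real.sign_sub_sign_sub_mul_sign_nonneg (ε : ℝ) {x : ℝ} (hx : 0 ≤ x) :
    0 ≤ Real.sign x - Real.sign (x - ε * Real.sign x) := by
  rcases hx.eq_or_lt with rfl | hpos
  · simp [Real.sign_zero]
  · rw [Real.sign_of_pos hpos]
    linarith [Real.sign_le_one (x - ε * 1)]

lemma Real.sign_sub_sign_sub_mul_sign_neg (ε x : ℝ) :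
    Real.sign (-x) - Real.sign (-x - ε * Real.sign (-x))
      = -(Real.sign x - Real.sign (x - ε * Real.sign x)) := by
  rw [Real.sign_neg, show -x - ε * -Real.sign x = -(x - ε * Real.sign x) by ring, Real.sign_neg]
  ring

lemma pow_mul_pow_le_pow_mul_pow {R : Type*} [CommSemiring R] [LinearOrder R]
    [IsStrictOrderedRing R] {p q : R} (hq : 0 ≤ q) (hqp : q ≤ p) {i j : ℕ} (hij : i ≤ j) :
    p ^ i * q ^ j ≤ p ^ j * q ^ i := by
  obtain ⟨m, rfl⟩ := Nat.exists_eq_add_of_le hij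
  calc p ^ i * q ^ (i + m) = p ^ i * q ^ i * q ^ m := by ring
    _ ≤ p ^ i * q ^ i * p ^ m :=
      mul_le_mul_of_nonneg_left (pow_le_pow_left₀ hq hqp m) (by have := hq.trans hqp; positivity)
    _ = p ^ (i + m) * q ^ i := by ring

lemma choose_mul_pow_mul_pow_reflect_le {n k : ℕ} (hkn : k ≤ n) (hnk : n ≤ 2 * k)
    {p q : ℝ} (hq : 0 ≤ q) (hqp : q ≤ p) :
    (n.choose (n - k) : ℝ) * p ^ (n - k) * q ^ (n - (n - k))
      ≤ n.choose k * p ^ k * q ^ (n - k) := by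
  rw [Nat.choose_symm hkn, Nat.sub_sub_self hkn, mul_assoc, mul_assoc]
  exact mul_le_mul_of_nonneg_left (pow_mul_pow_le_pow_mul_pow hq hqp (by omega)) (by positivity)

theorem sum_choose_mul_pow_mul_nonneg_of_antisymm {n : ℕ} {p q : ℝ} (hq : 0 ≤ q) (hqp : q ≤ p)
    {f : ℕ → ℝ} (hf_reflect : ∀ k ≤ n, f (n - k) = -f k)
    (hf_nonneg : ∀ k ≤ n, n ≤ 2 * k → 0 ≤ f k) :
    0 ≤ ∑ k ∈ range (n + 1), (n.choose k : ℝ) * p ^ k * q ^ (n - k) * f k := by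
  set a : ℕ → ℝ := fun k => n.choose k * p ^ k * q ^ (n - k)
  have hupper : ∀ k ≤ n, n ≤ 2 * k → 0 ≤ (a k - a (n - k)) * f k := fun k hkn hnk =>
    mul_nonneg (sub_nonneg.2 (choose_mul_pow_mul_pow_reflect_le hkn hnk hq hqp))
      (hf_nonneg k hkn hnk)
  have hterm : ∀ k ∈ range (n + 1), 0 ≤ (a k - a (n - k)) * f k := by
    intro k hk
    have hkn : k ≤ n := Nat.lt_succ_iff.1 (mem_range.1 hk)
    rcases le_or_gt n (2 * k) with hnk | hnk
    · exact hupper k hkn hnk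
    · have := hupper (n - k) (Nat.sub_le n k) (by omega)
      rwa [Nat.sub_sub_self hkn, hf_reflect k hkn, ← neg_mul_neg, neg_sub, neg_neg] at this
  have hpair : ∑ k ∈ range (n + 1), a k * f k = -∑ k ∈ range (n + 1), a (n - k) * f k := by
    rw [← sum_range_reflect, ← sum_neg_distrib]
    refine sum_congr rfl fun k hk => ?_
    have hkn : k ≤ n := Nat.lt_succ_iff.1 (mem_range.1 hk)
    rw [Nat.add_sub_cancel, hf_reflect k hkn, mul_neg]
  have htwice : 2 * ∑ k ∈ range (n + 1), a k * f k
      = ∑ k ∈ range (n + 1), (a k - a (n - k)) * f k := by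
    rw [two_mul]
    nth_rewrite 2 [hpair]
    simp only [sub_mul, sum_sub_distrib]
    ring
  have := sum_nonneg hterm
  change 0 ≤ ∑ k ∈ range (n + 1), a k * f k
  linarith

lemma two_mul_natCast_div_sub_one_reflect {n k : ℕ} (hn : n ≠ 0) (hkn : k ≤ n) :
    2 * ((n - k : ℕ) : ℝ) / n - 1 = -(2 * (k : ℝ) / n - 1) := by
  rw [Nat.cast_sub hkn]
  field_simp
  ring

lemma two_mul_natCast_div_sub_one_nonneg {n k : ℕ} (hn : 0 < n) (hnk : n ≤ 2 * k) :
    0 ≤ 2 * (k : ℝ) / n - 1 := by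
  rw [sub_nonneg, le_div_iff₀ (by exact_mod_cast hn), one_mul]
  exact_mod_cast hnk

theorem berGap_nonneg_general (d : ℕ) (W ε : ℝ) (θ : Fin d → ℝ) (τ : ℝ)
    (hW : 0 < W) (hθ : ∀ j, 0 ≤ θ j) (hτ : τ ∈ Set.Ioo (0 : ℝ) 1)
    (n : ℕ) (hn : 1 ≤ n) :
    0 ≤ berGap d W ε θ τ n := by
  obtain ⟨hτ0, hτ1⟩ := hτ
  refine mul_nonneg (by positivity) (sum_nonneg fun j _ => mul_nonneg (hθ j) ?_)
  refine sum_choose_mul_pow_mul_nonneg_of_antisymm (by linarith) (by linarith) ?_ ?_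
  · intro k hkn
    rw [two_mul_natCast_div_sub_one_reflect (by omega) hkn, mul_neg]
    exact Real.sign_sub_sign_sub_mul_sign_neg ε _
  · intro k _ hnk
    exact Real.sign_sub_sign_sub_mul_sign_nonneg ε
      (mul_nonneg (hθ j) (two_mul_natCast_div_sub_one_nonneg hn hnk))

theorem berGap_nonneg (d : ℕ) (W ε : ℝ) (θ : Fin d → ℝ) (τ : ℝ)
    (hW : 0 < W) (hε : 0 < ε) (hθ : ∀ j, 0 ≤ θ j) (hτ : τ ∈ Set.Ioo (0 : ℝ) 1)
    (n : ℕ) (hn : 1 ≤ n) :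
    0 ≤ berGap d W ε θ τ n :=
  berGap_nonneg_general d W ε θ τ hW hθ hτ n hn
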